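/- Fixed-point consistency of the MCV value iteration: if K = −R⁻¹Bᵀ(M + γH) and (M, H) satisfy the Lyapunov-type equations (A+BK)ᵀM + M(A+BK) + KᵀRK + Q = 0 and (A+BK)ᵀH + H(A+BK) + 4MGWGᵀM = 0, then M and H satisfy the coupled algebraic Riccati equations AᵀM + MA + Q − MBR⁻¹BᵀM + γ²HBR⁻¹BᵀH = 0 and AᵀH + HA − MBR⁻¹BᵀH − HBR⁻¹BᵀM − 2γHBR⁻¹BᵀH + 4MGWGᵀM = 0, provided M and H are symmetric. -/
import Mathlib


open Matrix

/-- Fixed-point consistency of the MCV value iteration: if `K = −R⁻¹Bᵀ(M + γH)` and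
`(M, H)` satisfy the two Lyapunov-type equations, then `M` and `H` satisfy the coupled
algebraic Riccati equations. -/
theorem mcv_fixed_point_consistency {n m s : ℕ}
    (A M H : Matrix (Fin n) (Fin n) ℝ) (B : Matrix (Fin n) (Fin m) ℝ)
    (G : Matrix (Fin n) (Fin s) ℝ) (W : Matrix (Fin s) (Fin s) ℝ)
    (Q : Matrix (Fin n) (Fin n) ℝ) (R : Matrix (Fin m) (Fin m) ℝ)
    [Invertible R] (hRsym : Rᵀ = R) (γ : ℝ) (hγ : 0 < γ)
    (hMsym : Mᵀ = M) (hHsym : Hᵀ = H)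
    (K : Matrix (Fin m) (Fin n) ℝ) (hK : K = -(R⁻¹ * Bᵀ * (M + γ • H)))
    (hLyapM : (A + B * K)ᵀ * M + M * (A + B * K) + Kᵀ * R * K + Q = 0)
    (hLyapH : (A + B * K)ᵀ * H + H * (A + B * K) + (4 : ℝ) • (M * G * W * Gᵀ * M) = 0) :
    Aᵀ * M + M * A + Q - M * B * R⁻¹ * Bᵀ * M + γ ^ 2 • (H * B * R⁻¹ * Bᵀ * H) = 0 ∧
    Aᵀ * H + H * A - M * B * R⁻¹ * Bᵀ * H - H * B * R⁻¹ * Bᵀ * M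
      - (2 * γ) • (H * B * R⁻¹ * Bᵀ * H) + (4 : ℝ) • (M * G * W * Gᵀ * M) = 0 := by
  have hRinv : (R⁻¹)ᵀ = R⁻¹ := by rw [Matrix.transpose_nonsing_inv, hRsym]
  subst hK
  simp only [Matrix.transpose_add, Matrix.transpose_mul, Matrix.transpose_neg,
    Matrix.transpose_smul, Matrix.transpose_transpose, hMsym, hHsym, hRinv,
    Matrix.neg_mul, Matrix.mul_neg, Matrix.add_mul, Matrix.mul_add,
    Matrix.smul_mul, Matrix.mul_smul, Matrix.mul_assoc,
    Matrix.mul_inv_cancel_left_of_invertible, smul_smul, smul_add, smul_neg,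
    neg_neg, neg_add, pow_two] at hLyapM hLyapH ⊢
  constructor
  · linear_combination (norm := module) hLyapM
  · linear_combination (norm := module) hLyapH
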